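/- If the kneading map satisfies Q(k) = max(0, k − d) for all k (for a fixed d ∈ ℕ), then the all-zero sequence ⟨0⟩ has exactly d preimages under the add-and-carry map α on E. -/

import Mathlib

/-!
Finite sets of positions with pairwise gaps at least `d` are greedy expansions in the base `(S_k)`,
and every `n` has one. Subtracting one from such an expansion `G` with lowest position `q` replaces
`q` by the progression `q - 1, q - 1 - d, …` down to `(q - 1) % d`, because
`S_q - 1 = S_{q-1} + S_{q-1-d} + ⋯`. Hence `α` sends the expansion of `S_q - 1` to `{q}`; letting
`q → ∞` in a fixed residue class mod `d`, continuity gives `α = ⟨0⟩` on the `d` indicators of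
residue classes. Conversely, if `α e = ⟨0⟩`, density and continuity give greedy expansions agreeing
with `e` on arbitrarily long prefixes whose successors vanish there, so by the borrowing rule each
such prefix is that of a residue class; one class occurs for infinitely many prefix lengths, and
`e` is its indicator.
-/

/-- Tail sum `Σ_{k > i} e_k S_k` of a digit sequence. -/
noncomputable def tailSum (S e : ℕ → ℕ) (i : ℕ) : ℕ := ∑' k : ℕ, if i < k then e k * S k else 0

/-- Greedy representation of `n` in the cutting-time base `(S_i)`. -/
noncomputable def IsGreedyRep (S : ℕ → ℕ) (n : ℕ) (e : ℕ → ℕ) : Prop :=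
  (∀ i, e i ≤ 1) ∧ (∃ N, ∀ i, N ≤ i → e i = 0) ∧
  (n = ∑' i : ℕ, e i * S i) ∧
  (∀ i, (e i = 1 ↔ IsGreatest {j | S j ≤ n - tailSum S e i} i))

/-- The number-system space `E` associated to a kneading map `Q`. -/
def Eset (Q : ℕ → ℕ) : Set (ℕ → ℕ) :=
  {e | (∀ i, e i ≤ 1) ∧ ∀ i j, e i = 1 → Q (i + 1) ≤ j → j < i → e j = 0}

open Filter Topology

variable {d : ℕ} {S : ℕ → ℕ}

theorem StrictMono.exists_le_lt_succ {f : ℕ → ℕ} (hf : StrictMono f) {n : ℕ} (hn : f 0 ≤ n) :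
    ∃ i, f i ≤ n ∧ n < f (i + 1) := by
  have hex : ∃ i, n < f (i + 1) := ⟨n, (Nat.lt_succ_self n).trans_le (hf.id_le (n + 1))⟩
  refine ⟨Nat.find hex, ?_, Nat.find_spec hex⟩
  rcases h : Nat.find hex with _ | i
  · exact hn
  · exact not_lt.1 (Nat.find_min hex (h ▸ i.lt_succ_self))

theorem indicator_one_le_one {ι : Type*} (s : Set ι) (i : ι) : s.indicator (1 : ι → ℕ) i ≤ 1 := by
  by_cases hi : i ∈ s <;> simp [hi]

theorem indicator_one_eq_one_iff {ι : Type*} {s : Set ι} {i : ι} :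
    s.indicator (1 : ι → ℕ) i = 1 ↔ i ∈ s := by
  by_cases hi : i ∈ s <;> simp [hi]

theorem tsum_indicator_one_mul (F : Finset ℕ) (f : ℕ → ℕ) :
    ∑' k, (F : Set ℕ).indicator 1 k * f k = ∑ k ∈ F, f k := by
  rw [tsum_eq_sum (s := F) fun k hk => by simp [hk]]
  exact Finset.sum_congr rfl fun k hk => by simp [hk]

theorem tendsto_nhds_of_eventually_apply_eq {ι : Type*} {l : Filter ι} {f : ι → ℕ → ℕ}
    {g : ℕ → ℕ} (h : ∀ i, ∀ᶠ m in l, f m i = g i) : Tendsto f l (𝓝 g) :=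
  tendsto_pi_nhds.2 fun i => by simpa [nhds_discrete] using h i

theorem eventually_forall_le_apply_eq (e : ℕ → ℕ) (M : ℕ) :
    ∀ᶠ f in 𝓝 e, ∀ i ≤ M, f i = e i := by
  have : ∀ i, ∀ᶠ f in 𝓝 e, f i = e i := fun i => by
    simpa [nhds_discrete] using (continuous_apply i).tendsto e
  simpa using (Filter.eventually_all_finset (Finset.Iic M)).2 fun i _ => this i

theorem ContinuousOn.exists_mem_near_of_mem_closure {X Y : Type*} [TopologicalSpace X]
    [TopologicalSpace Y] {f : X → Y} {t : Set X} (hf : ContinuousOn f (closure t)) {x : X}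
    (hx : x ∈ closure t) {p : X → Prop} {q : Y → Prop} (hp : ∀ᶠ y in 𝓝 x, p y)
    (hq : ∀ᶠ z in 𝓝 (f x), q z) : ∃ y ∈ t, p y ∧ q (f y) := by
  have := mem_closure_iff_nhdsWithin_neBot.1 hx
  have hft : Tendsto f (𝓝[t] x) (𝓝 (f x)) := (hf x hx).mono subset_closure
  exact (eventually_mem_nhdsWithin.and
    ((hp.filter_mono nhdsWithin_le_nhds).and (hft.eventually hq))).exists

theorem exists_eq_of_forall_exists_eqOn_Iic {β : Type*} {n : ℕ} {e : ℕ → β} {f : ℕ → ℕ → β}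
    (h : ∀ M, ∃ r < n, ∀ i ≤ M, e i = f r i) : ∃ r < n, e = f r := by
  by_contra! hne
  have : ∀ r, ∃ i, r < n → e i ≠ f r i := fun r => by
    by_cases hr : r < n
    · exact (Function.ne_iff.1 (hne r hr)).imp fun _ hi _ => hi
    · exact ⟨0, fun h => absurd h hr⟩
  choose w hw using this
  obtain ⟨r, hr, heq⟩ := h ((Finset.range n).sup w)
  exact hw r hr (heq _ (Finset.le_sup (Finset.mem_range.2 hr)))

theorem tailSum_indicator (S : ℕ → ℕ) (F : Finset ℕ) (i : ℕ) :
    tailSum S ((F : Set ℕ).indicator 1) i = ∑ k ∈ F with i < k, S k := by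
  rw [tailSum, ← tsum_indicator_one_mul]
  congr 1 with k
  by_cases hk : k ∈ F <;> by_cases hik : i < k <;> simp [hk, hik]

theorem IsGreedyRep.unique {S e e' : ℕ → ℕ} {n : ℕ} (h : IsGreedyRep S n e)
    (h' : IsGreedyRep S n e') : e = e' := by
  obtain ⟨hle, ⟨N, hN⟩, -, hgreedy⟩ := h
  obtain ⟨hle', ⟨N', hN'⟩, -, hgreedy'⟩ := h'
  suffices ∀ t k, max N N' ≤ k + t → e k = e' k from
    funext fun k => this (max N N') k (by omega)
  intro t
  induction t with
  | zero => intro k hk; rw [hN k (by omega), hN' k (by omega)]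
  | succ t ih =>
    intro k hk
    have htail : tailSum S e k = tailSum S e' k :=
      tsum_congr fun j => by
        split_ifs with hkj
        · rw [ih j (by omega)]
        · rfl
    have := hle k
    have := hle' k
    have := (hgreedy k).trans (htail ▸ hgreedy' k).symm
    omega

def SpacedBy (d : ℕ) (s : Set ℕ) : Prop :=
  ∀ ⦃i⦄, i ∈ s → ∀ ⦃j⦄, j ∈ s → i < j → i + d ≤ j

namespace SpacedBy

theorem mono {s t : Set ℕ} (hst : s ⊆ t) (ht : SpacedBy d t) : SpacedBy d s :=
  fun _ hi _ hj hij => ht (hst hi) (hst hj) hij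

theorem insert {s : Set ℕ} (hs : SpacedBy d s) {i : ℕ} (hi : ∀ k ∈ s, k + d ≤ i) :
    SpacedBy d (insert i s) := by
  rintro a (rfl | ha) b (rfl | hb) hab
  · exact absurd hab (lt_irrefl _)
  · have := hi b hb; omega
  · exact hi a ha
  · exact hs ha hb hab

theorem setOf_mod_eq (d r : ℕ) : SpacedBy d {i | i % d = r} :=
  fun _ hi _ hj hij => Nat.ModEq.add_le_of_lt (hi.trans hj.symm) hij

theorem indicator_mem_Eset {s : Set ℕ} (hs : SpacedBy d s) : s.indicator 1 ∈ Eset (· - d) := by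
  refine ⟨indicator_one_le_one s, fun i j hi hij hji => ?_⟩
  rw [indicator_one_eq_one_iff] at hi
  refine Set.indicator_of_notMem (fun hj => ?_) _
  have := hs hj hi hji
  simp only at hij
  omega

end SpacedBy

def progressionBelow (d q : ℕ) : Finset ℕ :=
  (Finset.range q).filter (· % d = (q - 1) % d)

theorem lt_of_mem_progressionBelow {q k : ℕ} (hk : k ∈ progressionBelow d q) : k < q :=
  Finset.mem_range.1 (Finset.mem_filter.1 hk).1

theorem spacedBy_progressionBelow (d q : ℕ) : SpacedBy d (progressionBelow d q) :=
  (SpacedBy.setOf_mod_eq d ((q - 1) % d)).mono fun _ hk => (Finset.mem_filter.1 hk).2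

theorem progressionBelow_succ (p : ℕ) :
    progressionBelow d (p + 1) = insert p (progressionBelow d (p + 1 - d)) := by
  have hmod : d ≤ p → (p + 1 - d - 1) % d = p % d := fun h => by
    rw [show p + 1 - d - 1 = p - d by omega, ← Nat.mod_eq_sub_mod h]
  ext k
  simp only [progressionBelow, Finset.mem_filter, Finset.mem_range, Finset.mem_insert,
    Nat.add_sub_cancel]
  constructor
  · rintro ⟨hkp, hkmod⟩
    rcases (Nat.lt_succ_iff.1 hkp).eq_or_lt with rfl | hkp
    · exact Or.inl rfl
    have := Nat.ModEq.add_le_of_lt hkmod hkp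
    exact Or.inr ⟨by omega, by rw [hkmod, hmod (by omega)]⟩
  · rintro (rfl | ⟨hkp, hkmod⟩)
    · exact ⟨Nat.lt_succ_self _, rfl⟩
    · exact ⟨by omega, by rw [hkmod, hmod (by omega)]⟩

/-- If `q = min G`, then `borrow d G q` represents `∑ k ∈ G, S k - 1`. -/
def borrow (d : ℕ) (G : Finset ℕ) (q : ℕ) : Finset ℕ :=
  G.erase q ∪ progressionBelow d q

theorem spacedBy_borrow {G : Finset ℕ} {q : ℕ} (hG : SpacedBy d G) (hq : q ∈ G)
    (hmin : ∀ k ∈ G, q ≤ k) : SpacedBy d (borrow d G q) := by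
  have hlow : ∀ k ∈ G.erase q, q + d ≤ k := fun k hk => by
    obtain ⟨hkq, hkG⟩ := Finset.mem_erase.1 hk
    exact hG hq hkG (lt_of_le_of_ne (hmin k hkG) (Ne.symm hkq))
  rintro i hi j hj hij
  simp only [borrow, Finset.coe_union, Set.mem_union, Finset.mem_coe] at hi hj
  rcases hi with hi | hi <;> rcases hj with hj | hj
  · exact hG (Finset.mem_of_mem_erase hi) (Finset.mem_of_mem_erase hj) hij
  · have := hlow i hi; have := lt_of_mem_progressionBelow hj; omega
  · have := lt_of_mem_progressionBelow hi; have := hlow j hj; omega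
  · exact spacedBy_progressionBelow d q hi hj hij

noncomputable def residueIndicator (d r : ℕ) : ℕ → ℕ := {i | i % d = r}.indicator 1

theorem indicator_borrow_apply_of_lt {G : Finset ℕ} {q i : ℕ} (hmin : ∀ k ∈ G, q ≤ k)
    (hi : i < q) : (borrow d G q : Set ℕ).indicator 1 i = residueIndicator d ((q - 1) % d) i := by
  have hmem : i ∈ borrow d G q ↔ i % d = (q - 1) % d := by
    have : i ∉ G.erase q := fun h => (hmin i (Finset.mem_of_mem_erase h)).not_gt hi
    simp [borrow, progressionBelow, hi, this]
  simp only [residueIndicator, Set.indicator_apply, Finset.mem_coe, hmem, Set.mem_ofPred_eq]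

theorem ncard_image_residueIndicator (d : ℕ) : (residueIndicator d '' Set.Iio d).ncard = d := by
  rw [Set.InjOn.ncard_image fun a ha b _ hab => ?_, Set.ncard_Iio_nat]
  have := congrFun hab a
  by_contra hne
  simp [residueIndicator, Nat.mod_eq_of_lt (Set.mem_Iio.1 ha), hne] at this

/-- Cutting times `S_k = S_{k-1} + S_{Q(k)}` of the kneading map `Q(k) = k - d`. -/
structure IsCuttingTimeSeq (d : ℕ) (S : ℕ → ℕ) : Prop where
  zero : S 0 = 1
  succ : ∀ k, S (k + 1) = S k + S (k + 1 - d)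

namespace IsCuttingTimeSeq

theorem pos (hS : IsCuttingTimeSeq d S) (k : ℕ) : 0 < S k := by
  induction k with
  | zero => simp [hS.zero]
  | succ k ih => rw [hS.succ]; omega

theorem d_pos (hS : IsCuttingTimeSeq d S) : 0 < d := by
  by_contra! hd
  have := hS.succ 0
  simp [Nat.le_zero.1 hd, hS.zero] at this

theorem strictMono (hS : IsCuttingTimeSeq d S) : StrictMono S :=
  strictMono_nat_of_lt_succ fun k => by rw [hS.succ]; have := hS.pos (k + 1 - d); omega

theorem sum_lt (hS : IsCuttingTimeSeq d S) {F : Finset ℕ} (hF : SpacedBy d F) {i : ℕ}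
    (hi : ∀ k ∈ F, k < i) : ∑ k ∈ F, S k < S i := by
  induction F using Finset.induction_on_max generalizing i with
  | empty => simpa using hS.pos i
  | insert a F hlt ih =>
    have hFa : ∀ k ∈ F, k < a + 1 - d := fun k hk => by
      have := hF (by simp [hk]) (by simp) (hlt k hk); omega
    calc ∑ k ∈ insert a F, S k = S a + ∑ k ∈ F, S k :=
          Finset.sum_insert fun h => lt_irrefl a (hlt a h)
    _ < S a + S (a + 1 - d) := by gcongr; exact ih (hF.mono (by simp)) hFa
    _ = S (a + 1) := (hS.succ a).symm
    _ ≤ S i := hS.strictMono.monotone (hi a (by simp))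

theorem exists_spacedBy_sum_eq (hS : IsCuttingTimeSeq d S) (n : ℕ) :
    ∃ F : Finset ℕ, SpacedBy d F ∧ ∑ k ∈ F, S k = n := by
  induction n using Nat.strong_induction_on with
  | _ n ih =>
  rcases n.eq_zero_or_pos with rfl | hn
  · exact ⟨∅, by simp [SpacedBy], rfl⟩
  obtain ⟨i, hin, hni⟩ := hS.strictMono.exists_le_lt_succ (n := n) (by rw [hS.zero]; omega)
  obtain ⟨F, hF, hFn⟩ := ih (n - S i) (by have := hS.pos i; omega)
  have hFi : ∀ k ∈ F, k + d ≤ i := fun k hk => by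
    have hk : S k < S (i + 1 - d) := by
      have := Finset.single_le_sum (fun j _ => (S j).zero_le) hk
      have := hS.succ i
      omega
    have := hS.strictMono.lt_iff_lt.1 hk
    omega
  refine ⟨insert i F, by simpa using hF.insert hFi, ?_⟩
  rw [Finset.sum_insert fun h => by have := hFi i h; have := hS.d_pos; omega]
  omega

theorem isGreedyRep_indicator (hS : IsCuttingTimeSeq d S) {F : Finset ℕ} (hF : SpacedBy d F) :
    IsGreedyRep S (∑ k ∈ F, S k) ((F : Set ℕ).indicator 1) := by
  obtain ⟨N, hN⟩ := F.exists_nat_subset_range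
  refine ⟨indicator_one_le_one _, ⟨N, fun i hi => Set.indicator_of_notMem
    (fun h => (Finset.mem_range.1 (hN h)).not_ge hi) _⟩, (tsum_indicator_one_mul F S).symm,
    fun i => ?_⟩
  rw [indicator_one_eq_one_iff, Finset.mem_coe, tailSum_indicator,
    ← Finset.sum_filter_add_sum_filter_not F (i < ·), Nat.add_sub_cancel_left]
  set H := ∑ k ∈ F with ¬i < k, S k
  have hH : SpacedBy d (F.filter (¬i < ·)) :=
    hF.mono (Finset.coe_subset.2 (Finset.filter_subset _ _))
  have hH_lt : H < S (i + 1) := hS.sum_lt hH fun k hk => by simp at hk; omega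
  have hiH : S i ≤ H ↔ i ∈ F := by
    refine ⟨fun h => by_contra fun hi => h.not_gt (hS.sum_lt hH fun k hk => ?_),
      fun h => Finset.single_le_sum (fun _ _ => Nat.zero_le _) (by simp [h])⟩
    simp only [Finset.mem_filter, not_lt] at hk
    exact hk.2.lt_of_ne (by rintro rfl; exact hi hk.1)
  rw [← hiH]
  exact ⟨fun h => ⟨h, fun j hj =>
    Nat.lt_succ_iff.1 (hS.strictMono.lt_iff_lt.1 (hj.trans_lt hH_lt))⟩, fun h => h.1⟩

theorem sum_progressionBelow_add_one (hS : IsCuttingTimeSeq d S) (q : ℕ) :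
    ∑ k ∈ progressionBelow d q, S k + 1 = S q := by
  induction q using Nat.strong_induction_on with
  | _ q ih =>
  rcases q with _ | p
  · simp [progressionBelow, hS.zero]
  have hp : p ∉ progressionBelow d (p + 1 - d) := fun h => by
    have := lt_of_mem_progressionBelow h; have := hS.d_pos; omega
  rw [progressionBelow_succ, Finset.sum_insert hp, add_assoc, ih _ (by have := hS.d_pos; omega),
    hS.succ]

theorem sum_borrow_add_one (hS : IsCuttingTimeSeq d S) {G : Finset ℕ} {q : ℕ} (hq : q ∈ G)
    (hmin : ∀ k ∈ G, q ≤ k) : ∑ k ∈ borrow d G q, S k + 1 = ∑ k ∈ G, S k := by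
  have hdisj : Disjoint (G.erase q) (progressionBelow d q) :=
    Finset.disjoint_left.2 fun k hk hk' =>
      (lt_of_mem_progressionBelow hk').not_ge (hmin k (Finset.mem_of_mem_erase hk))
  rw [borrow, Finset.sum_union hdisj, add_assoc, hS.sum_progressionBelow_add_one,
    Finset.sum_erase_add _ _ hq]

variable {α : (ℕ → ℕ) → ℕ → ℕ}

theorem alpha_indicator_borrow (hS : IsCuttingTimeSeq d S)
    (hagree : ∀ n e e', IsGreedyRep S n e → IsGreedyRep S (n + 1) e' → α e = e')
    {G : Finset ℕ} (hG : SpacedBy d G) {q : ℕ} (hq : q ∈ G) (hmin : ∀ k ∈ G, q ≤ k) :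
    α ((borrow d G q : Set ℕ).indicator 1) = (G : Set ℕ).indicator 1 :=
  hagree _ _ _ (hS.isGreedyRep_indicator (spacedBy_borrow hG hq hmin))
    (hS.sum_borrow_add_one hq hmin ▸ hS.isGreedyRep_indicator hG)

theorem alpha_residueIndicator_eq_zero (hS : IsCuttingTimeSeq d S)
    (hcont : ContinuousOn α (Eset (· - d)))
    (hagree : ∀ n e e', IsGreedyRep S n e → IsGreedyRep S (n + 1) e' → α e = e')
    {r : ℕ} (hr : r < d) : α (residueIndicator d r) = 0 := by
  set q : ℕ → ℕ := fun m => m * d + r + 1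
  have hqr : ∀ m, (q m - 1) % d = r := fun m => by simp [q, Nat.mod_eq_of_lt hr]
  have hq : ∀ i, ∀ᶠ m in atTop, i < q m := fun i =>
    eventually_atTop.2 ⟨i, fun m hm => show i < m * d + r + 1 by nlinarith [hS.d_pos]⟩
  have hsingle : ∀ m, SpacedBy d (({q m} : Finset ℕ) : Set ℕ) := fun m => by simp [SpacedBy]
  have hborrow : Tendsto (fun m => (borrow d {q m} (q m) : Set ℕ).indicator 1) atTop
      (𝓝[Eset (· - d)] residueIndicator d r) := by
    refine tendsto_nhdsWithin_iff.2 ⟨tendsto_nhds_of_eventually_apply_eq fun i => ?_,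
      Eventually.of_forall fun m =>
        (spacedBy_borrow (hsingle m) (by simp) (by simp)).indicator_mem_Eset⟩
    exact (hq i).mono fun m hm => by rw [indicator_borrow_apply_of_lt (by simp) hm, hqr]
  have hcarry :
      Tendsto (fun m => α ((borrow d {q m} (q m) : Set ℕ).indicator 1)) atTop (𝓝 0) := by
    simp only [hS.alpha_indicator_borrow hagree (hsingle _) (Finset.mem_singleton_self _) (by simp)]
    exact tendsto_nhds_of_eventually_apply_eq fun i => (hq i).mono fun m hm => by simp [hm.ne]
  exact tendsto_nhds_unique
    ((hcont _ (SpacedBy.setOf_mod_eq d r).indicator_mem_Eset).tendsto.comp hborrow) hcarry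

theorem exists_eqOn_residueIndicator (hS : IsCuttingTimeSeq d S)
    (hcont : ContinuousOn α (closure {e | ∃ n, IsGreedyRep S n e}))
    (hagree : ∀ n e e', IsGreedyRep S n e → IsGreedyRep S (n + 1) e' → α e = e')
    {e : ℕ → ℕ} (he : e ∈ closure {e | ∃ n, IsGreedyRep S n e}) (hαe : α e = 0) (M : ℕ) :
    ∃ r < d, ∀ i ≤ M, e i = residueIndicator d r i := by
  obtain ⟨g, ⟨n, hg⟩, hge, hαg⟩ := hcont.exists_mem_near_of_mem_closure he
    (eventually_forall_le_apply_eq e M) (by rw [hαe]; exact eventually_forall_le_apply_eq 0 M)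
  obtain ⟨G, hG, hGn⟩ := hS.exists_spacedBy_sum_eq (n + 1)
  have hαgG : α g = (G : Set ℕ).indicator 1 :=
    hagree n g _ hg (hGn ▸ hS.isGreedyRep_indicator hG)
  have hGne : G.Nonempty := Finset.nonempty_iff_ne_empty.2 (by rintro rfl; simp at hGn)
  set q := G.min' hGne
  have hq : q ∈ G := G.min'_mem hGne
  have hmin : ∀ k ∈ G, q ≤ k := fun k hk => G.min'_le k hk
  have hMq : M < q := by
    by_contra! hqM
    simpa [hαgG, hq] using hαg q hqM
  have hgq : g = (borrow d G q : Set ℕ).indicator 1 := by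
    have hsum : ∑ k ∈ borrow d G q, S k = n := by
      have := hS.sum_borrow_add_one hq hmin; omega
    exact hg.unique (hsum ▸ hS.isGreedyRep_indicator (spacedBy_borrow hG hq hmin))
  refine ⟨(q - 1) % d, Nat.mod_lt _ hS.d_pos, fun i hi => ?_⟩
  rw [← hge i hi, hgq, indicator_borrow_apply_of_lt hmin (by omega)]

theorem setOf_alpha_eq_zero (hS : IsCuttingTimeSeq d S) (hcont : ContinuousOn α (Eset (· - d)))
    (hagree : ∀ n e e', IsGreedyRep S n e → IsGreedyRep S (n + 1) e' → α e = e')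
    (hclos : Eset (· - d) = closure {e | ∃ n, IsGreedyRep S n e}) :
    {e | e ∈ Eset (· - d) ∧ α e = 0} = residueIndicator d '' Set.Iio d := by
  ext e
  constructor
  · rintro ⟨he, hαe⟩
    rw [hclos] at hcont he
    obtain ⟨r, hr, rfl⟩ :=
      exists_eq_of_forall_exists_eqOn_Iic (hS.exists_eqOn_residueIndicator hcont hagree he hαe)
    exact ⟨r, hr, rfl⟩
  · rintro ⟨r, hr, rfl⟩
    exact ⟨(SpacedBy.setOf_mod_eq d r).indicator_mem_Eset,
      hS.alpha_residueIndicator_eq_zero hcont hagree hr⟩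

end IsCuttingTimeSeq

theorem alpha_zero_has_d_preimages_general (d : ℕ) (S Q : ℕ → ℕ)
    (hQdef : ∀ k, Q k = k - d)
    (hS0 : S 0 = 1)
    (hrec : ∀ k, 1 ≤ k → S k = S (k - 1) + S (Q k))
    (α : (ℕ → ℕ) → (ℕ → ℕ))
    (hcont : ContinuousOn α (Eset Q))
    (hagree : ∀ (n : ℕ) (e e' : ℕ → ℕ),
      IsGreedyRep S n e → IsGreedyRep S (n + 1) e' → α e = e')
    (hclos : Eset Q = closure {e | ∃ n : ℕ, IsGreedyRep S n e}) :
    {e | e ∈ Eset Q ∧ α e = fun _ => 0}.ncard = d := by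
  obtain rfl : Q = (· - d) := funext hQdef
  have hS : IsCuttingTimeSeq d S := ⟨hS0, fun k => hrec (k + 1) k.succ_pos⟩
  rw [← Pi.zero_def, hS.setOf_alpha_eq_zero hcont hagree hclos, ncard_image_residueIndicator]

/-- If the kneading map is `Q(k) = max(0, k − d)` for a fixed `d ≥ 1`, then the zero
sequence `⟨0⟩` has exactly `d` preimages under the add-and-carry map `α` on `E`. -/
theorem alpha_zero_has_d_preimages (d : ℕ) (hd : 1 ≤ d) (S Q : ℕ → ℕ)
    (hQdef : ∀ k, Q k = k - d)
    (hS0 : S 0 = 1) (hmono : StrictMono S)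
    (hrec : ∀ k, 1 ≤ k → S k = S (k - 1) + S (Q k))
    (α : (ℕ → ℕ) → (ℕ → ℕ))
    (hmaps : Set.MapsTo α (Eset Q) (Eset Q))
    (hcont : ContinuousOn α (Eset Q))
    (hagree : ∀ (n : ℕ) (e e' : ℕ → ℕ),
      IsGreedyRep S n e → IsGreedyRep S (n + 1) e' → α e = e')
    (hclos : Eset Q = closure {e | ∃ n : ℕ, IsGreedyRep S n e}) :
    {e | e ∈ Eset Q ∧ α e = fun _ => 0}.ncard = d :=
  alpha_zero_has_d_preimages_general d S Q hQdef hS0 hrec α hcont hagree hclos
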